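/- Assume h ≥ 0 on [0,1] and H > 0 on (0,1]. Let u be a solution of the traveling-wave problem with speed c > 0, and suppose there exist β ∈ ℝ, γ > 0 and positive finite limits lim_{v→1−} D(v)/(1−v)^β and lim_{v→1−} g(v)/(1−v)^γ, with γ + β/(p−1) > 1/(p−1). If γ < 1, then u attains the value 1, i.e., there exists ξ ∈ ℝ with u(ξ) = 1. If γ ≥ 1, then u(ξ) < 1 for all ξ ∈ ℝ. -/

import Mathlib

open Set MeasureTheory Filter

/-- The conjugate exponent `p' = p/(p-1)`. -/
noncomputable def pconj (p : ℝ) : ℝ := p / (p - 1)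

/-- The constant `k(p)` from the paper. -/
noncomputable def kfun (p : ℝ) : ℝ :=
  if p < 2 then 1 / (2 ^ (pconj p - 1) - 1)
  else if p = 2 then 1
  else pconj p / (pconj p - 1 +
    (1 + pconj p * (pconj p - 1) ^ ((1 : ℝ) / (pconj p - 2)) +
      (pconj p - 1) ^ (pconj p / (pconj p - 2))) /
    (1 + (pconj p - 1) ^ ((1 : ℝ) / (pconj p - 2))) ^ pconj p)

/-- Standing assumptions on the data `p, θ, D, H, h, g` (combustion setting). -/
structure CombSetup (p θ : ℝ) (D H h g : ℝ → ℝ) : Prop where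
  hp : 1 < p
  hθ0 : 0 < θ
  hθ1 : θ < 1
  hD : ContDiffOn ℝ 1 D (Ioo 0 1)
  hDpos : ∀ v ∈ Ioo (0 : ℝ) 1, 0 < D v
  hH : ContDiffOn ℝ 1 H (Icc 0 1)
  hH0 : H 0 = 0
  hh : ContinuousOn h (Icc 0 1)
  hHd : ∀ v ∈ Icc (0 : ℝ) 1, HasDerivWithinAt H (h v) (Icc 0 1) v
  hgc : ContinuousOn g (Icc 0 1)
  hg0 : ∀ v ∈ Icc (0 : ℝ) θ, g v = 0
  hgpos : ∀ v ∈ Ioo θ 1, 0 < g v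
  hg1 : g 1 = 0
  hInt : IntegrableOn (fun v => D v ^ (pconj p - 1) * g v) (Ioo 0 1)

/-- The diffusive flux `ξ ↦ D(u(ξ)) |u'(ξ)|^{p-2} u'(ξ)`. -/
noncomputable def flux (p : ℝ) (D u : ℝ → ℝ) : ℝ → ℝ :=
  fun ξ => D (u ξ) * (|deriv u ξ| ^ (p - 2) * deriv u ξ)

/-- Solution of the traveling-wave problem with speed `c`. -/
structure IsTWSol (p c : ℝ) (D h g : ℝ → ℝ) (u : ℝ → ℝ) : Prop where
  cont : Continuous u
  mem : ∀ ξ, u ξ ∈ Icc (0 : ℝ) 1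
  smooth : ContDiffOn ℝ 1 u {ξ | u ξ ∈ Ioo (0 : ℝ) 1}
  eqn : ∀ ξ ∈ {ξ | u ξ ∈ Ioo (0 : ℝ) 1},
    HasDerivAt (flux p D u) (-(c + h (u ξ)) * deriv u ξ - g (u ξ)) ξ
  flux_cont : Continuous (fun ξ => if u ξ ∈ Ioo (0 : ℝ) 1 then flux p D u ξ else 0)
  flux_to0 : ∀ ε > 0, ∃ δ > 0, ∀ ξ, u ξ ∈ Ioo (0 : ℝ) 1 → u ξ < δ → |flux p D u ξ| < ε
  flux_to1 : ∀ ε > 0, ∃ δ > 0, ∀ ξ, u ξ ∈ Ioo (0 : ℝ) 1 → 1 - δ < u ξ → |flux p D u ξ| < ε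
  lim_bot : Tendsto u atBot (nhds 1)
  lim_top : Tendsto u atTop (nhds 0)

/-- Positive solution of the first-order problem with parameter `c`. -/
structure IsFOSol (p c : ℝ) (D h g : ℝ → ℝ) (y : ℝ → ℝ) : Prop where
  cont : ContinuousOn y (Icc 0 1)
  eqn : ∀ v ∈ Ioo (0 : ℝ) 1, HasDerivAt y
    (pconj p * ((c + h v) * (max (y v) 0) ^ (1 / p) - D v ^ (pconj p - 1) * g v)) v
  y0 : y 0 = 0
  y1 : y 1 = 0
  pos : ∀ v ∈ Ioo (0 : ℝ) 1, 0 < y v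

/-!
Write `w = 1 - u` and `ζ = -D(u) |u'|^{p-2} u'` for the flux.

If `γ < 1` and `u < 1` everywhere, then `ζ > 0` near `-∞`, and with `α = (1 + γ)/2`,
`σ = β + α (p - 1) > 1` one shows `ζ ≥ w ^ σ` near `-∞`: wherever `ζ ≤ w ^ σ` the speed
`w' = (ζ / D(u))^{1/(p-1)}` is `O(w ^ α) = o(w ^ γ)`, so the reaction `g(u) ≍ w ^ γ` dominates
`ζ'`. Hence `ζ - w ^ σ` only crosses zero upwards, and it cannot stay negative since then
`ζ - k w ^ α` would be nondecreasing and thus `ζ ≥ k w ^ α ≫ w ^ σ`. Then `w' ≥ C w ^ α` with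
`α < 1`, so `w` vanishes at a finite point.

If `γ ≥ 1`, then `g(v) ≤ K (1 - v)` near `1`. Integrating the equation from the last point `a`
where `u = 1` to a minimum point `b` of `u` on a short interval `[a, a + δ]` gives
`ζ(b) ≤ -(c - δ K)(1 - u(b)) < 0`, i.e. `u'(b) > 0`, contradicting minimality.
-/

open Topology

lemma HasDerivAt.eventually_nhdsLT_lt {f : ℝ → ℝ} {f' x : ℝ} (hf : HasDerivAt f f' x)
    (hf' : 0 < f') : ∀ᶠ y in 𝓝[<] x, f y < f x := by
  filter_upwards [(hf.tendsto_slope.mono_left (nhdsLT_le_nhdsNE x)).eventually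
    (eventually_gt_nhds hf'), self_mem_nhdsWithin] with y hslope (hy : y < x)
  rw [slope_comm, slope_def_field] at hslope
  exact sub_pos.1 ((div_pos_iff_of_pos_right (sub_pos.2 hy)).1 hslope)

lemma HasDerivAt.eventually_nhdsGT_gt {f : ℝ → ℝ} {f' x : ℝ} (hf : HasDerivAt f f' x)
    (hf' : 0 < f') : ∀ᶠ y in 𝓝[>] x, f x < f y := by
  filter_upwards [(hf.tendsto_slope.mono_left (nhdsGT_le_nhdsNE x)).eventually
    (eventually_gt_nhds hf'), self_mem_nhdsWithin] with y hslope (hy : x < y)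
  rw [slope_def_field] at hslope
  exact sub_pos.1 ((div_pos_iff_of_pos_right (sub_pos.2 hy)).1 hslope)

lemma nonneg_of_hasDerivAt_pos_of_eq_zero {ψ : ℝ → ℝ} {a b : ℝ} (hψ : Continuous ψ)
    (ha : 0 ≤ ψ a) (hzero : ∀ x ∈ Ico a b, ψ x = 0 → ∃ d > 0, HasDerivAt ψ d x) :
    ∀ x ∈ Icc a b, 0 ≤ ψ x := by
  refine IsClosed.Icc_subset_of_forall_mem_nhdsWithin
    ((isClosed_le continuous_const hψ).inter isClosed_Icc) ha fun x ⟨(hx : 0 ≤ ψ x), hxI⟩ => ?_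
  rcases hx.eq_or_lt with h0 | hpos
  · obtain ⟨d, hd, hψd⟩ := hzero x hxI h0.symm
    filter_upwards [hψd.eventually_nhdsGT_gt hd] with y hy
    exact (h0.trans_lt hy).le
  · filter_upwards [nhdsWithin_le_nhds (hψ.continuousAt.eventually (eventually_gt_nhds hpos))]
      with y hy
    exact hy.le

lemma eventually_pos_of_frequently_nonneg {ψ : ℝ → ℝ} (hψ : Continuous ψ)
    (hzero : ∀ᶠ x in atBot, ψ x = 0 → ∃ d > 0, HasDerivAt ψ d x)
    (hfreq : ∃ᶠ x in atBot, 0 ≤ ψ x) : ∀ᶠ x in atBot, 0 < ψ x := by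
  obtain ⟨R, hR⟩ := eventually_atBot.1 hzero
  refine eventually_atBot.2 ⟨R, fun x hx => ?_⟩
  obtain ⟨a, hax, ha⟩ := frequently_atBot.1 hfreq (x - 1)
  have hnonneg := nonneg_of_hasDerivAt_pos_of_eq_zero hψ ha
    fun y hy => hR y (hy.2.le.trans hx)
  refine (hnonneg x ⟨by linarith, le_rfl⟩).lt_of_ne' fun h0 => ?_
  obtain ⟨d, hd, hψd⟩ := hR x hx h0
  obtain ⟨y, hyx, hy⟩ :=
    ((hψd.eventually_nhdsLT_lt hd).and (Ioo_mem_nhdsLT (by linarith : a < x))).exists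
  linarith [hnonneg y ⟨hy.1.le, hy.2.le⟩]

lemma monotoneOn_Iic_of_hasDerivAt_nonneg {f f' : ℝ → ℝ} {b : ℝ}
    (hf : ∀ x ≤ b, HasDerivAt f (f' x) x) (hf' : ∀ x ≤ b, 0 ≤ f' x) :
    MonotoneOn f (Iic b) :=
  monotoneOn_of_hasDerivWithinAt_nonneg (convex_Iic b)
    (fun x hx => (hf x hx).continuousAt.continuousWithinAt)
    (fun x hx => (hf x (interior_subset (s := Iic b) hx)).hasDerivWithinAt)
    (fun x hx => hf' x (interior_subset (s := Iic b) hx))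

lemma eventually_ge_of_hasDerivAt_nonneg {f f' : ℝ → ℝ} {a : ℝ}
    (hf : ∀ᶠ x in atBot, HasDerivAt f (f' x) x ∧ 0 ≤ f' x) (hlim : Tendsto f atBot (𝓝 a)) :
    ∀ᶠ x in atBot, a ≤ f x := by
  obtain ⟨R, hR⟩ := eventually_atBot.1 hf
  have hmono := monotoneOn_Iic_of_hasDerivAt_nonneg (fun x hx => (hR x hx).1)
    (fun x hx => (hR x hx).2)
  refine eventually_atBot.2 ⟨R, fun x hx => le_of_tendsto hlim ?_⟩
  filter_upwards [eventually_le_atBot x] with y hy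
  exact hmono (hy.trans hx) hx hy

/-- `w ^ (1 - α) - (1 - α) C x` is nondecreasing. -/
lemma not_eventually_pos_of_rpow_le_deriv {w w' : ℝ → ℝ} {C α : ℝ} (hC : 0 < C) (hα : α < 1)
    (hw : ∀ᶠ x in atBot, HasDerivAt w (w' x) x ∧ C * w x ^ α ≤ w' x) :
    ¬ ∀ᶠ x in atBot, 0 < w x := by
  intro hpos
  obtain ⟨R, hR⟩ := eventually_atBot.1 (hw.and hpos)
  set k := (1 - α) * C
  have hk : 0 < k := mul_pos (sub_pos.2 hα) hC
  have hmono : MonotoneOn (fun x => w x ^ (1 - α) - k * x) (Iic R) := by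
    refine monotoneOn_Iic_of_hasDerivAt_nonneg
      (f' := fun x => w' x * (1 - α) * w x ^ (1 - α - 1) - k) (fun x hx => ?_) (fun x hx => ?_)
    · exact (((hR x hx).1.1.rpow_const (Or.inl (hR x hx).2.ne')).sub
        ((hasDerivAt_id' x).const_mul k)).congr_deriv (by ring)
    · obtain ⟨⟨-, hle⟩, hwx⟩ := hR x hx
      have hC_le : C ≤ w' x * w x ^ (1 - α - 1) := by
        calc C = C * w x ^ α * w x ^ (1 - α - 1) := by
              rw [mul_assoc, ← Real.rpow_add hwx]; norm_num
          _ ≤ w' x * w x ^ (1 - α - 1) :=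
              mul_le_mul_of_nonneg_right hle (Real.rpow_nonneg hwx.le _)
      have : 0 ≤ (1 - α) * (w' x * w x ^ (1 - α - 1) - C) :=
        mul_nonneg (sub_pos.2 hα).le (sub_nonneg.2 hC_le)
      simp only [k]
      linarith
  set x₀ := R - (w R ^ (1 - α) + 1) / k
  have hx₀ : x₀ ≤ R := sub_le_self _ (div_pos (by positivity [(hR R le_rfl).2]) hk).le
  have hΦ := hmono hx₀ self_mem_Iic hx₀
  have hkx : k * x₀ = k * R - (w R ^ (1 - α) + 1) := by
    simp only [x₀]; field_simp
  have := Real.rpow_nonneg (hR x₀ hx₀).2.le (1 - α)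
  simp only at hΦ
  linarith

lemma eventually_bounds_of_tendsto_div {α : Type*} {l : Filter α} {f r : α → ℝ} {M : ℝ}
    (h : Tendsto (fun v => f v / r v) l (𝓝 M)) (hM : 0 < M) (hr : ∀ᶠ v in l, 0 < r v) :
    ∀ᶠ v in l, M / 2 * r v ≤ f v ∧ f v ≤ 2 * M * r v := by
  filter_upwards [h.eventually (eventually_gt_nhds (half_lt_self hM)),
    h.eventually (eventually_lt_nhds (by linarith : M < 2 * M)), hr] with v hlo hhi hrv
  exact ⟨((lt_div_iff₀ hrv).1 hlo).le, ((div_lt_iff₀ hrv).1 hhi).le⟩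

lemma eventually_rpow_one_sub_pos (e : ℝ) : ∀ᶠ v in 𝓝[<] (1 : ℝ), 0 < (1 - v) ^ e := by
  filter_upwards [self_mem_nhdsWithin] with v (hv : v < 1)
  exact Real.rpow_pos_of_pos (sub_pos.2 hv) e

lemma sign_abs_rpow_mul_self (r d : ℝ) : SignType.sign (|d| ^ r * d) = SignType.sign d := by
  rcases eq_or_ne d 0 with rfl | hd
  · simp
  · rw [sign_mul, sign_pos (Real.rpow_pos_of_pos (abs_pos.2 hd) r), one_mul]

lemma rpow_div_le_of_le {ζ Dv w L σ β r : ℝ} (hw : 0 < w) (hL : 0 < L) (hζ : 0 ≤ ζ)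
    (hζw : ζ ≤ w ^ σ) (hD : L * w ^ β ≤ Dv) (hr : 0 ≤ r) :
    (ζ / Dv) ^ r ≤ L⁻¹ ^ r * w ^ ((σ - β) * r) := by
  have hLw : 0 < L * w ^ β := by positivity
  calc (ζ / Dv) ^ r ≤ (w ^ σ / (L * w ^ β)) ^ r :=
        Real.rpow_le_rpow (div_nonneg hζ (hLw.trans_le hD).le)
          (div_le_div₀ (by positivity) hζw hLw hD) hr
    _ = L⁻¹ ^ r * w ^ ((σ - β) * r) := by
        rw [Real.rpow_mul hw.le, Real.rpow_sub hw, ← Real.mul_rpow (by positivity) (by positivity)]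
        field_simp

lemma le_rpow_div_of_le {ζ Dv w L σ β r : ℝ} (hw : 0 < w) (hL : 0 < L) (hDv : 0 < Dv)
    (hζw : w ^ σ ≤ ζ) (hD : Dv ≤ L * w ^ β) (hr : 0 ≤ r) :
    L⁻¹ ^ r * w ^ ((σ - β) * r) ≤ (ζ / Dv) ^ r := by
  calc L⁻¹ ^ r * w ^ ((σ - β) * r) = (w ^ σ / (L * w ^ β)) ^ r := by
        rw [Real.rpow_mul hw.le, Real.rpow_sub hw, ← Real.mul_rpow (by positivity) (by positivity)]
        field_simp
    _ ≤ (ζ / Dv) ^ r :=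
        Real.rpow_le_rpow (by positivity)
          (div_le_div₀ ((by positivity : (0 : ℝ) ≤ w ^ σ).trans hζw) hζw hDv hD) hr

noncomputable def extFlux (p : ℝ) (D u : ℝ → ℝ) (ξ : ℝ) : ℝ :=
  if u ξ ∈ Ioo (0 : ℝ) 1 then flux p D u ξ else 0

lemma sign_flux {p : ℝ} {D u : ℝ → ℝ} {ξ : ℝ} (hD : 0 < D (u ξ)) :
    SignType.sign (flux p D u ξ) = SignType.sign (deriv u ξ) := by
  rw [flux, sign_mul, sign_pos hD, one_mul, sign_abs_rpow_mul_self]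

lemma neg_deriv_eq_rpow_of_deriv_neg {p : ℝ} {D u : ℝ → ℝ} {ξ : ℝ} (hp : 1 < p)
    (hD : 0 < D (u ξ)) (hd : deriv u ξ < 0) :
    -deriv u ξ = (-flux p D u ξ / D (u ξ)) ^ (p - 1)⁻¹ := by
  have hpos : 0 < -deriv u ξ := neg_pos.2 hd
  have hflux : -flux p D u ξ / D (u ξ) = (-deriv u ξ) ^ (p - 1) := by
    rw [flux, abs_of_neg hd, show p - 1 = p - 2 + 1 by ring, Real.rpow_add_one hpos.ne']
    field_simp
  rw [hflux, Real.rpow_rpow_inv hpos.le (by linarith)]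

lemma CombSetup.exists_add_le {p θ : ℝ} {D H h g : ℝ → ℝ} (S : CombSetup p θ D H h g)
    (c : ℝ) : ∃ K, 0 ≤ K ∧ ∀ v ∈ Icc (0 : ℝ) 1, c + h v ≤ K := by
  obtain ⟨K, hK⟩ := isCompact_Icc.exists_bound_of_continuousOn (continuousOn_const.add S.hh)
    (f := fun v => c + h v)
  exact ⟨K, (norm_nonneg _).trans (hK 0 ⟨le_rfl, zero_le_one⟩),
    fun v hv => (le_abs_self _).trans (hK v hv)⟩

lemma CombSetup.monotoneOn_H {p θ : ℝ} {D H h g : ℝ → ℝ} (S : CombSetup p θ D H h g)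
    (hh0 : ∀ v ∈ Icc (0 : ℝ) 1, 0 ≤ h v) : MonotoneOn H (Icc 0 1) :=
  monotoneOn_of_hasDerivWithinAt_nonneg (convex_Icc 0 1) S.hH.continuousOn
    (fun x hx => (S.hHd x (interior_subset hx)).mono interior_subset)
    (fun x hx => hh0 x (interior_subset hx))

namespace IsTWSol

variable {p θ c β γ : ℝ} {D H h g u : ℝ → ℝ}

lemma isOpen_setOf_mem_Ioo (hu : IsTWSol p c D h g u) :
    IsOpen {ξ | u ξ ∈ Ioo (0 : ℝ) 1} :=
  isOpen_Ioo.preimage hu.cont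

lemma hasDerivAt (hu : IsTWSol p c D h g u) {ξ : ℝ} (hξ : u ξ ∈ Ioo 0 1) :
    HasDerivAt u (deriv u ξ) ξ :=
  ((hu.smooth.differentiableOn one_ne_zero).differentiableAt
    (hu.isOpen_setOf_mem_Ioo.mem_nhds hξ)).hasDerivAt

lemma continuous_extFlux (hu : IsTWSol p c D h g u) : Continuous (extFlux p D u) :=
  hu.flux_cont

lemma hasDerivAt_extFlux (hu : IsTWSol p c D h g u) {ξ : ℝ} (hξ : u ξ ∈ Ioo 0 1) :
    HasDerivAt (extFlux p D u) (-(c + h (u ξ)) * deriv u ξ - g (u ξ)) ξ := by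
  refine (hu.eqn ξ hξ).congr_of_eventuallyEq ?_
  filter_upwards [hu.isOpen_setOf_mem_Ioo.mem_nhds hξ] with s hs
  exact if_pos hs

lemma tendsto_extFlux_atBot (hu : IsTWSol p c D h g u) :
    Tendsto (extFlux p D u) atBot (𝓝 0) := by
  refine Metric.tendsto_nhds.2 fun ε hε => ?_
  obtain ⟨δ, hδ, hflux⟩ := hu.flux_to1 ε hε
  filter_upwards [hu.lim_bot.eventually (eventually_gt_nhds (sub_lt_self 1 hδ))] with ξ hξ
  rw [Real.dist_eq, sub_zero, extFlux]
  split_ifs with hmem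
  · exact hflux ξ hmem hξ
  · simpa using hε

/-- Integrate the equation, using `(c + h(u)) u' = (c u + H(u))'`. -/
lemma extFlux_sub_extFlux (S : CombSetup p θ D H h g)
    (hu : IsTWSol p c D h g u) {a b : ℝ} (hab : a ≤ b)
    (hmem : ∀ x ∈ Ioo a b, u x ∈ Ioo 0 1) :
    extFlux p D u b - extFlux p D u a =
      c * (u a - u b) + (H (u a) - H (u b)) - ∫ x in a..b, g (u x) := by
  have hg : Continuous fun x => g (u x) := S.hgc.comp_continuous hu.cont hu.mem
  have hH : Continuous fun x => H (u x) := S.hH.continuousOn.comp_continuous hu.cont hu.mem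
  have hFTC := intervalIntegral.integral_eq_sub_of_hasDerivAt_of_le hab
    (f := fun x => extFlux p D u x + c * u x + H (u x)) (f' := fun x => -g (u x))
    ((hu.continuous_extFlux.add (continuous_const.mul hu.cont)).add hH).continuousOn
    (fun x hx => by
      have hux := hmem x hx
      have hHx : HasDerivAt H (h (u x)) (u x) :=
        (S.hHd (u x) (hu.mem x)).hasDerivAt (Icc_mem_nhds hux.1 hux.2)
      exact (((hu.hasDerivAt_extFlux hux).add ((hu.hasDerivAt hux).const_mul c)).add
        (hHx.comp x (hu.hasDerivAt hux))).congr_deriv (by ring))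
    (hg.neg.intervalIntegrable (μ := volume) a b)
  rw [intervalIntegral.integral_neg] at hFTC
  linarith

lemma exists_last_eq_one (hu : IsTWSol p c D h g u) (h1 : ∃ ξ, u ξ = 1) :
    ∃ a, u a = 1 ∧ ∀ x, a < x → u x < 1 := by
  obtain ⟨N, hN⟩ := eventually_atTop.1 (hu.lim_top.eventually (eventually_lt_nhds one_pos))
  have hbdd : BddAbove {ξ | u ξ = 1} :=
    ⟨N, fun ξ (hξ : u ξ = 1) => not_lt.1 fun hNξ => (hN ξ hNξ.le).ne hξ⟩
  refine ⟨_, (isClosed_eq hu.cont continuous_const).csSup_mem h1 hbdd, fun x hx => ?_⟩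
  exact (hu.mem x).2.lt_of_ne fun hux => hx.not_ge (le_csSup hbdd hux)

lemma extFlux_pos_of_eq_one (S : CombSetup p θ D H h g) (hu : IsTWSol p c D h g u)
    (hh0 : ∀ v ∈ Icc (0 : ℝ) 1, 0 ≤ h v) {a b K : ℝ} (hab : a < b) (ha : u a = 1)
    (hmem : ∀ x ∈ Ioo a b, u x ∈ Ioo 0 1) (hg : ∀ x ∈ Icc a b, g (u x) ≤ K)
    (hK : (b - a) * K < c * (1 - u b)) : 0 < extFlux p D u b := by
  have henergy := hu.extFlux_sub_extFlux S hab.le hmem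
  have hfa : extFlux p D u a = 0 := if_neg (by simp [ha])
  have hH : H (u b) ≤ H 1 := S.monotoneOn_H hh0 (hu.mem b) ⟨zero_le_one, le_rfl⟩ (hu.mem b).2
  have hint : ∫ x in a..b, g (u x) ≤ (b - a) * K := by
    calc ∫ x in a..b, g (u x) ≤ ∫ _ in a..b, K :=
          intervalIntegral.integral_mono_on hab.le
            ((S.hgc.comp_continuous hu.cont hu.mem).intervalIntegrable a b)
            intervalIntegrable_const hg
      _ = (b - a) * K := by simp
  rw [ha] at henergy
  linarith

lemma eventually_nhds_pos_and_le (S : CombSetup p θ D H h g) (hu : IsTWSol p c D h g u)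
    {M a : ℝ} (hg : ∀ᶠ v in 𝓝[<] 1, g v ≤ M * (1 - v)) (ha : u a = 1) :
    ∀ᶠ x in 𝓝 a, 0 < u x ∧ g (u x) ≤ M * (1 - u x) := by
  obtain ⟨η, hη, hηg⟩ := (mem_nhdsLT_iff_exists_Ioo_subset' one_pos).1 hg
  filter_upwards [hu.cont.continuousAt.eventually
    (eventually_gt_nhds (ha ▸ max_lt hη one_pos : max η 0 < u a))] with x hx
  refine ⟨(le_max_right _ _).trans_lt hx, ?_⟩
  rcases (hu.mem x).2.eq_or_lt with hx1 | hx1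
  · simp [hx1, S.hg1]
  · exact hηg ⟨(le_max_left _ _).trans_lt hx, hx1⟩

theorem lt_one (S : CombSetup p θ D H h g) (hu : IsTWSol p c D h g u)
    (hh0 : ∀ v ∈ Icc (0 : ℝ) 1, 0 ≤ h v) (hc : 0 < c) {M : ℝ} (hM : 0 < M)
    (hg : ∀ᶠ v in 𝓝[<] 1, g v ≤ M * (1 - v)) (ξ : ℝ) : u ξ < 1 := by
  by_contra! hξ
  obtain ⟨a, ha, hlt⟩ := hu.exists_last_eq_one ⟨ξ, le_antisymm (hu.mem ξ).2 hξ⟩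
  obtain ⟨δ', hδ', hball⟩ := Metric.eventually_nhds_iff.1 (hu.eventually_nhds_pos_and_le S hg ha)
  set δ := min (δ' / 2) (c / (2 * M))
  have hδ : 0 < δ := lt_min (half_pos hδ') (by positivity)
  have hnear : ∀ x ∈ Icc a (a + δ), 0 < u x ∧ g (u x) ≤ M * (1 - u x) := fun x hx => hball <| by
    rw [Real.dist_eq, abs_of_nonneg (sub_nonneg.2 hx.1)]
    linarith [hx.2, min_le_left (δ' / 2) (c / (2 * M))]
  obtain ⟨b, hb, hbmin⟩ := isCompact_Icc.exists_isMinOn (nonempty_Icc.2 (by linarith))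
    hu.cont.continuousOn (s := Icc a (a + δ))
  have hub1 : u b < 1 := (hbmin ⟨by linarith, le_rfl⟩).trans_lt (hlt _ (by linarith))
  have hab : a < b := hb.1.lt_of_ne fun hab => by rw [← hab, ha] at hub1; exact hub1.false
  have hmem : ∀ x ∈ Ioc a b, u x ∈ Ioo 0 1 := fun x hx =>
    ⟨(hnear x ⟨hx.1.le, hx.2.trans hb.2⟩).1, hlt x hx.1⟩
  have hflux := hu.extFlux_pos_of_eq_one S hh0 hab ha (fun x hx => hmem x (Ioo_subset_Ioc_self hx))
    (K := M * (1 - u b)) (fun x hx => by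
      have hxδ : x ∈ Icc a (a + δ) := ⟨hx.1, hx.2.trans hb.2⟩
      calc g (u x) ≤ M * (1 - u x) := (hnear x hxδ).2
        _ ≤ M * (1 - u b) := by gcongr; exact hbmin hxδ)
    (by
      have hba : (b - a) * M < c := by
        calc (b - a) * M ≤ δ * M := by gcongr; linarith [hb.2]
          _ ≤ c / (2 * M) * M := by gcongr; exact min_le_right _ _
          _ < c := by field_simp; linarith
      nlinarith [sub_pos.2 hub1])
  have hub := hmem b ⟨hab, le_rfl⟩
  have hderiv : 0 < deriv u b := by
    rw [extFlux, if_pos hub] at hflux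
    exact sign_eq_one_iff.1 (sign_flux (S.hDpos _ hub) ▸ sign_eq_one_iff.2 hflux)
  obtain ⟨y, hyb, hy⟩ :=
    (((hu.hasDerivAt hub).eventually_nhdsLT_lt hderiv).and (Ioo_mem_nhdsLT hab)).exists
  exact (hbmin ⟨hy.1.le, hy.2.le.trans hb.2⟩).not_gt hyb

lemma eventually_neg_extFlux_pos (S : CombSetup p θ D H h g) (hu : IsTWSol p c D h g u)
    (hlt : ∀ ξ, u ξ < 1) : ∀ᶠ ξ in atBot, 0 < -extFlux p D u ξ := by
  have hθ : ∀ᶠ ξ in atBot, θ < u ξ := hu.lim_bot.eventually (eventually_gt_nhds S.hθ1)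
  have hmem : ∀ᶠ ξ in atBot, u ξ ∈ Ioo 0 1 := hθ.mono fun ξ hξ => ⟨S.hθ0.trans hξ, hlt ξ⟩
  refine eventually_pos_of_frequently_nonneg hu.continuous_extFlux.neg ?_ ?_
  · filter_upwards [hθ, hmem] with ξ hξ hux h0
    have hd : deriv u ξ = 0 := by
      rw [extFlux, if_pos hux, neg_eq_zero] at h0
      exact sign_eq_zero_iff.1 (sign_flux (S.hDpos _ hux) ▸ sign_eq_zero_iff.2 h0)
    refine ⟨g (u ξ), S.hgpos _ ⟨hξ, hlt ξ⟩, ?_⟩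
    exact (hu.hasDerivAt_extFlux hux).neg.congr_deriv (by simp [hd])
  · -- otherwise `u` would be nondecreasing near `-∞`, although `u < 1 = u(-∞)`
    by_contra hfreq
    rw [not_frequently] at hfreq
    have hmono : ∀ᶠ ξ in atBot, HasDerivAt u (deriv u ξ) ξ ∧ 0 ≤ deriv u ξ := by
      filter_upwards [hfreq, hmem] with ξ hξ hux
      rw [extFlux, if_pos hux, neg_nonneg, not_le] at hξ
      exact ⟨hu.hasDerivAt hux,
        (sign_eq_one_iff.1 (sign_flux (S.hDpos _ hux) ▸ sign_eq_one_iff.2 hξ)).le⟩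
    obtain ⟨ξ, hξ⟩ := (eventually_ge_of_hasDerivAt_nonneg hmono hu.lim_bot).exists
    exact (hlt ξ).not_ge hξ

lemma eventually_neg_deriv_eq_rpow (S : CombSetup p θ D H h g) (hu : IsTWSol p c D h g u)
    (hlt : ∀ ξ, u ξ < 1) :
    ∀ᶠ ξ in atBot, u ξ ∈ Ioo 0 1 ∧ 0 < -extFlux p D u ξ ∧
      -deriv u ξ = (-extFlux p D u ξ / D (u ξ)) ^ (p - 1)⁻¹ := by
  filter_upwards [hu.lim_bot.eventually (eventually_gt_nhds zero_lt_one),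
    hu.eventually_neg_extFlux_pos S hlt] with ξ hξ hpos
  have hux : u ξ ∈ Ioo 0 1 := ⟨hξ, hlt ξ⟩
  rw [extFlux, if_pos hux] at hpos ⊢
  have hd : deriv u ξ < 0 :=
    sign_eq_neg_one_iff.1 (sign_flux (S.hDpos _ hux) ▸ sign_eq_neg_one_iff.2 (neg_pos.1 hpos))
  exact ⟨hux, hpos, neg_deriv_eq_rpow_of_deriv_neg S.hp (S.hDpos _ hux) hd⟩

lemma tendsto_rpow_one_sub_atBot (hu : IsTWSol p c D h g u) {e : ℝ} (he : 0 < e) :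
    Tendsto (fun ξ => (1 - u ξ) ^ e) atBot (𝓝 0) := by
  simpa [Real.zero_rpow he.ne'] using
    ((tendsto_const_nhds.sub hu.lim_bot).rpow_const (Or.inr he.le) :
      Tendsto (fun ξ => (1 - u ξ) ^ e) atBot (𝓝 ((1 - 1) ^ e)))

lemma eventually_neg_deriv_le (S : CombSetup p θ D H h g) (hu : IsTWSol p c D h g u)
    (hlt : ∀ ξ, u ξ < 1) {L M K α : ℝ} (hL : 0 < L)
    (hD : ∀ᶠ ξ in atBot, L * (1 - u ξ) ^ β ≤ D (u ξ)) (hM : 0 < M) (hK : 0 ≤ K) (hα : γ < α) :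
    ∀ᶠ ξ in atBot, -extFlux p D u ξ ≤ (1 - u ξ) ^ (β + α * (p - 1)) →
      0 ≤ -deriv u ξ ∧ -deriv u ξ ≤ L⁻¹ ^ (p - 1)⁻¹ * (1 - u ξ) ^ α ∧
        K * -deriv u ξ ≤ M * (1 - u ξ) ^ γ := by
  have hp : p - 1 ≠ 0 := (sub_pos.2 S.hp).ne'
  have hsmall : ∀ᶠ ξ in atBot, K * L⁻¹ ^ (p - 1)⁻¹ * (1 - u ξ) ^ (α - γ) ≤ M := by
    have := ((hu.tendsto_rpow_one_sub_atBot (sub_pos.2 hα)).const_mul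
      (K * L⁻¹ ^ (p - 1)⁻¹)).eventually (eventually_lt_nhds (by simpa))
    exact this.mono fun _ h => h.le
  filter_upwards [hu.eventually_neg_deriv_eq_rpow S hlt, hD, hsmall]
    with ξ ⟨hux, hpos, hformula⟩ hDξ hsmallξ hle
  have hw : 0 < 1 - u ξ := sub_pos.2 (hlt ξ)
  have hbound : -deriv u ξ ≤ L⁻¹ ^ (p - 1)⁻¹ * (1 - u ξ) ^ α := by
    rw [hformula]
    convert rpow_div_le_of_le hw hL hpos.le hle hDξ (inv_pos.2 (sub_pos.2 S.hp)).le using 3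
    rw [add_sub_cancel_left, mul_inv_cancel_right₀ hp]
  have hnonneg : 0 ≤ -deriv u ξ := hformula ▸ Real.rpow_nonneg (div_pos hpos (S.hDpos _ hux)).le _
  refine ⟨hnonneg, hbound, ?_⟩
  calc K * -deriv u ξ ≤ K * (L⁻¹ ^ (p - 1)⁻¹ * (1 - u ξ) ^ α) := by gcongr
    _ = K * L⁻¹ ^ (p - 1)⁻¹ * (1 - u ξ) ^ (α - γ) * (1 - u ξ) ^ γ := by
        rw [mul_assoc _ ((1 - u ξ) ^ (α - γ)), ← Real.rpow_add hw, sub_add_cancel]; ring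
    _ ≤ M * (1 - u ξ) ^ γ := by gcongr
lemma eventually_hasDerivAt_pos_of_neg_extFlux_eq (S : CombSetup p θ D H h g)
    (hu : IsTWSol p c D h g u) (hlt : ∀ ξ, u ξ < 1) {L M α : ℝ} (hL : 0 < L)
    (hD : ∀ᶠ ξ in atBot, L * (1 - u ξ) ^ β ≤ D (u ξ)) (hM : 0 < M)
    (hg : ∀ᶠ ξ in atBot, M * (1 - u ξ) ^ γ ≤ g (u ξ)) (hα : γ < α)
    (hσ : 1 < β + α * (p - 1)) :
    ∀ᶠ ξ in atBot, -extFlux p D u ξ - (1 - u ξ) ^ (β + α * (p - 1)) = 0 →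
      ∃ d > 0, HasDerivAt (fun x => -extFlux p D u x - (1 - u x) ^ (β + α * (p - 1))) d ξ := by
  set σ := β + α * (p - 1)
  obtain ⟨K, hK0, hK⟩ := S.exists_add_le c
  filter_upwards [hu.eventually_neg_deriv_eq_rpow S hlt, hg, hu.eventually_neg_deriv_le S hlt hL
    hD (half_pos hM) (add_nonneg hK0 (by linarith : (0 : ℝ) ≤ σ)) hα]
    with ξ ⟨hux, _, _⟩ hgξ hslow h0
  obtain ⟨hm, -, hKm⟩ := hslow (sub_eq_zero.1 h0).le
  have hw : 0 < 1 - u ξ := sub_pos.2 (hlt ξ)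
  have hwσ : (1 - u ξ) ^ (σ - 1) ≤ 1 :=
    Real.rpow_le_one hw.le (by linarith [(hu.mem ξ).1]) (by linarith)
  refine ⟨g (u ξ) - (c + h (u ξ)) * -deriv u ξ - -deriv u ξ * σ * (1 - u ξ) ^ (σ - 1), ?_,
    ((hu.hasDerivAt_extFlux hux).neg.sub (((hu.hasDerivAt hux).const_sub 1).rpow_const
      (Or.inl hw.ne'))).congr_deriv (by ring)⟩
  have hdrift : (c + h (u ξ)) * -deriv u ξ + -deriv u ξ * σ * (1 - u ξ) ^ (σ - 1) ≤
      (K + σ) * -deriv u ξ := by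
    have := mul_le_mul_of_nonneg_right (hK _ (hu.mem ξ)) hm
    have := mul_le_of_le_one_right (mul_nonneg hm (by linarith : (0 : ℝ) ≤ σ)) hwσ
    linarith
  have := mul_pos hM (Real.rpow_pos_of_pos hw γ)
  linarith

lemma eventually_le_neg_extFlux_of_lt (S : CombSetup p θ D H h g)
    (hu : IsTWSol p c D h g u) (hlt : ∀ ξ, u ξ < 1) {L M α : ℝ} (hL : 0 < L)
    (hD : ∀ᶠ ξ in atBot, L * (1 - u ξ) ^ β ≤ D (u ξ)) (hM : 0 < M)
    (hg : ∀ᶠ ξ in atBot, M * (1 - u ξ) ^ γ ≤ g (u ξ)) (hα0 : 0 < α) (hα : γ < α)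
    (hαγ : γ ≤ 2 * α - 1)
    (hfast : ∀ᶠ ξ in atBot, -extFlux p D u ξ < (1 - u ξ) ^ (β + α * (p - 1))) :
    ∀ᶠ ξ in atBot, M / (2 * α * L⁻¹ ^ (p - 1)⁻¹) * (1 - u ξ) ^ α ≤ -extFlux p D u ξ := by
  set C := L⁻¹ ^ (p - 1)⁻¹
  have hC : 0 < C := by positivity
  set k := M / (2 * α * C)
  obtain ⟨K, hK0, hK⟩ := S.exists_add_le c
  suffices hF : ∀ᶠ ξ in atBot, 0 ≤ -extFlux p D u ξ - k * (1 - u ξ) ^ α from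
    hF.mono fun _ h => sub_nonneg.1 h
  refine eventually_ge_of_hasDerivAt_nonneg (f' := fun ξ => g (u ξ) -
    (c + h (u ξ)) * -deriv u ξ - k * (-deriv u ξ * α * (1 - u ξ) ^ (α - 1))) ?_ ?_
  · filter_upwards [hu.eventually_neg_deriv_eq_rpow S hlt, hg,
      hu.eventually_neg_deriv_le S hlt hL hD (half_pos hM) hK0 hα, hfast]
      with ξ ⟨hux, _, _⟩ hgξ hslow hξ
    obtain ⟨hm, hmC, hKm⟩ := hslow hξ.le
    have hw : 0 < 1 - u ξ := sub_pos.2 (hlt ξ)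
    refine ⟨((hu.hasDerivAt_extFlux hux).neg.sub ((((hu.hasDerivAt hux).const_sub 1).rpow_const
      (Or.inl hw.ne')).const_mul k)).congr_deriv (by ring), ?_⟩
    have hch := mul_le_mul_of_nonneg_right (hK _ (hu.mem ξ)) hm
    have hk : k * (-deriv u ξ * α * (1 - u ξ) ^ (α - 1)) ≤ M / 2 * (1 - u ξ) ^ γ := by
      calc k * (-deriv u ξ * α * (1 - u ξ) ^ (α - 1))
          ≤ k * (C * (1 - u ξ) ^ α * α * (1 - u ξ) ^ (α - 1)) := by gcongr
        _ = M / 2 * (1 - u ξ) ^ (2 * α - 1) := by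
            rw [show 2 * α - 1 = α + (α - 1) by ring, Real.rpow_add hw]
            simp only [k]
            field_simp
        _ ≤ M / 2 * (1 - u ξ) ^ γ := mul_le_mul_of_nonneg_left
            (Real.rpow_le_rpow_of_exponent_ge hw (by linarith [(hu.mem ξ).1]) hαγ) (by positivity)
    linarith
  · simpa using hu.tendsto_extFlux_atBot.neg.sub
      ((hu.tendsto_rpow_one_sub_atBot hα0).const_mul k)

lemma frequently_rpow_le_neg_extFlux (S : CombSetup p θ D H h g)
    (hu : IsTWSol p c D h g u) (hlt : ∀ ξ, u ξ < 1) {L M α : ℝ} (hL : 0 < L)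
    (hD : ∀ᶠ ξ in atBot, L * (1 - u ξ) ^ β ≤ D (u ξ)) (hM : 0 < M)
    (hg : ∀ᶠ ξ in atBot, M * (1 - u ξ) ^ γ ≤ g (u ξ)) (hα0 : 0 < α) (hα : γ < α)
    (hαγ : γ ≤ 2 * α - 1) (hσ : α < β + α * (p - 1)) :
    ∃ᶠ ξ in atBot, (1 - u ξ) ^ (β + α * (p - 1)) ≤ -extFlux p D u ξ := by
  set σ := β + α * (p - 1)
  set k := M / (2 * α * L⁻¹ ^ (p - 1)⁻¹)
  by_contra hfreq
  simp only [not_frequently, not_le] at hfreq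
  have hsmall : ∀ᶠ ξ in atBot, (1 - u ξ) ^ (σ - α) < k :=
    (hu.tendsto_rpow_one_sub_atBot (sub_pos.2 hσ)).eventually (eventually_lt_nhds (by positivity))
  obtain ⟨ξ, hkξ, hsξ, hξ⟩ := ((hu.eventually_le_neg_extFlux_of_lt S hlt hL hD hM hg hα0 hα hαγ
    hfreq).and (hsmall.and hfreq)).exists
  have hw : 0 < 1 - u ξ := sub_pos.2 (hlt ξ)
  have hσα : (1 - u ξ) ^ σ = (1 - u ξ) ^ (σ - α) * (1 - u ξ) ^ α := by
    rw [← Real.rpow_add hw, sub_add_cancel]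
  have := mul_lt_mul_of_pos_right hsξ (Real.rpow_pos_of_pos hw α)
  linarith

theorem exists_eq_one (S : CombSetup p θ D H h g) (hu : IsTWSol p c D h g u)
    (hγ : 0 < γ) (hγ1 : γ < 1) {L M : ℝ} (hL : 0 < L)
    (hDlim : Tendsto (fun v => D v / (1 - v) ^ β) (𝓝[<] 1) (𝓝 L)) (hM : 0 < M)
    (hglim : Tendsto (fun v => g v / (1 - v) ^ γ) (𝓝[<] 1) (𝓝 M))
    (h1 : 1 / (p - 1) < γ + β / (p - 1)) : ∃ ξ, u ξ = 1 := by
  by_contra! hne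
  have hlt : ∀ ξ, u ξ < 1 := fun ξ => (hu.mem ξ).2.lt_of_ne (hne ξ)
  have hu1 : Tendsto u atBot (𝓝[<] 1) :=
    tendsto_nhdsWithin_iff.2 ⟨hu.lim_bot, .of_forall hlt⟩
  have hD := hu1.eventually
    (eventually_bounds_of_tendsto_div hDlim hL (eventually_rpow_one_sub_pos β))
  have hg := hu1.eventually
    (eventually_bounds_of_tendsto_div hglim hM (eventually_rpow_one_sub_pos γ))
  have hp : 0 < p - 1 := sub_pos.2 S.hp
  set α := (1 + γ) / 2 with hα
  have hγα : γ < α := by linarith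
  have hσ : 1 < β + α * (p - 1) := by
    rw [div_lt_iff₀ hp, add_mul, div_mul_cancel₀ _ hp.ne'] at h1
    nlinarith [mul_lt_mul_of_pos_right hγα hp]
  have hDlow := hD.mono fun _ h => h.1
  have hglow := hg.mono fun _ h => h.1
  have hcross : ∀ᶠ ξ in atBot, 0 < -extFlux p D u ξ - (1 - u ξ) ^ (β + α * (p - 1)) :=
    eventually_pos_of_frequently_nonneg (hu.continuous_extFlux.neg.sub
        ((continuous_const.sub hu.cont).rpow_const fun _ => Or.inr (by linarith)))
      (hu.eventually_hasDerivAt_pos_of_neg_extFlux_eq S hlt (half_pos hL) hDlow (half_pos hM)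
        hglow hγα hσ)
      ((hu.frequently_rpow_le_neg_extFlux S hlt (half_pos hL) hDlow (half_pos hM) hglow
        (by linarith) hγα (by linarith) (by linarith)).mono fun _ h => sub_nonneg.2 h)
  refine not_eventually_pos_of_rpow_le_deriv (w := fun ξ => 1 - u ξ) (w' := fun ξ => -deriv u ξ)
    (C := (2 * L)⁻¹ ^ (p - 1)⁻¹) (α := α) (by positivity) (by linarith) ?_
    (.of_forall fun ξ => sub_pos.2 (hlt ξ))
  filter_upwards [hu.eventually_neg_deriv_eq_rpow S hlt, hD, hcross]
    with ξ ⟨hux, _, hformula⟩ hDξ hξ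
  refine ⟨(hu.hasDerivAt hux).const_sub 1, ?_⟩
  rw [hformula]
  convert le_rpow_div_of_le (sub_pos.2 (hlt ξ)) (by positivity : (0 : ℝ) < 2 * L) (S.hDpos _ hux)
    (sub_nonneg.1 hξ.le) hDξ.2 (inv_pos.2 hp).le using 3
  rw [add_sub_cancel_left, mul_inv_cancel_right₀ hp.ne']

end IsTWSol

theorem stmt18_general (p θ c β γ : ℝ) (D H h g u : ℝ → ℝ) (S : CombSetup p θ D H h g)
    (hh0 : ∀ v ∈ Icc (0 : ℝ) 1, 0 ≤ h v)
    (hc : 0 < c) (hu : IsTWSol p c D h g u)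
    (hγ : 0 < γ)
    (hDlim : ∃ L > (0 : ℝ),
      Tendsto (fun v => D v / (1 - v) ^ β) (nhdsWithin 1 (Iio (1 : ℝ))) (nhds L))
    (hglim : ∃ M > (0 : ℝ),
      Tendsto (fun v => g v / (1 - v) ^ γ) (nhdsWithin 1 (Iio (1 : ℝ))) (nhds M))
    (h1 : 1 / (p - 1) < γ + β / (p - 1)) :
    (γ < 1 → ∃ ξ : ℝ, u ξ = 1) ∧
    (1 ≤ γ → ∀ ξ : ℝ, u ξ < 1) := by
  obtain ⟨L, hL, hDlim⟩ := hDlim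
  obtain ⟨M, hM, hglim⟩ := hglim
  refine ⟨fun hγ1 => hu.exists_eq_one S hγ hγ1 hL hDlim hM hglim h1,
    fun hγ1 => hu.lt_one S hh0 hc (M := 2 * M) (by positivity) ?_⟩
  filter_upwards [eventually_bounds_of_tendsto_div hglim hM (eventually_rpow_one_sub_pos γ),
    Ioo_mem_nhdsLT one_pos] with v hv hv01
  calc g v ≤ 2 * M * (1 - v) ^ γ := hv.2
    _ ≤ 2 * M * (1 - v) ^ (1 : ℝ) := mul_le_mul_of_nonneg_left
        (Real.rpow_le_rpow_of_exponent_ge (sub_pos.2 hv01.2) (by linarith [hv01.1]) hγ1)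
        (by positivity)
    _ = 2 * M * (1 - v) := by rw [Real.rpow_one]

/-- Asymptotics near 1, second regime. -/
theorem stmt18 (p θ c β γ : ℝ) (D H h g u : ℝ → ℝ) (S : CombSetup p θ D H h g)
    (hh0 : ∀ v ∈ Icc (0 : ℝ) 1, 0 ≤ h v)
    (hHpos : ∀ v ∈ Ioc (0 : ℝ) 1, 0 < H v)
    (hc : 0 < c) (hu : IsTWSol p c D h g u)
    (hγ : 0 < γ)
    (hDlim : ∃ L > (0 : ℝ),
      Tendsto (fun v => D v / (1 - v) ^ β) (nhdsWithin 1 (Iio (1 : ℝ))) (nhds L))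
    (hglim : ∃ M > (0 : ℝ),
      Tendsto (fun v => g v / (1 - v) ^ γ) (nhdsWithin 1 (Iio (1 : ℝ))) (nhds M))
    (h1 : 1 / (p - 1) < γ + β / (p - 1)) :
    (γ < 1 → ∃ ξ : ℝ, u ξ = 1) ∧
    (1 ≤ γ → ∀ ξ : ℝ, u ξ < 1) :=
  stmt18_general p θ c β γ D H h g u S hh0 hc hu hγ hDlim hglim h1
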